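/- There exist infinitely many pairwise non-equivalent classes under weak (1,2,3) homotopy: the projections Pₖ = ♯ᵏ 7_4 (connected sum of k copies of 7_4) satisfy W(Pₖ) = 2k, and since W is a weak (1,2,3) homotopy invariant, Pᵢ and Pⱼ are not weakly (1,2,3) homotopic for i ≠ j. -/
import Mathlib

theorem infinitely_many_weak123_classes
    (K : Type*) (weak123 : K → K → Prop) (sharp : K → K → K)
    (W : K → ℤ) (O k74 : K)
    (hinv : ∀ P Q, weak123 P Q → W P = W Q)
    (hadd : ∀ P P', W (sharp P P') = W P + W P')
    (hO : W O = 0) (h74 : W k74 = 2) :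
    (∀ k : ℕ, W ((fun P => sharp P k74)^[k] O) = 2 * k) ∧
    (∀ i j : ℕ, i ≠ j →
      ¬ weak123 ((fun P => sharp P k74)^[i] O) ((fun P => sharp P k74)^[j] O)) := by
  have hW : ∀ k : ℕ, W ((fun P => sharp P k74)^[k] O) = 2 * k := by
    intro k
    induction k with
    | zero => simpa using hO
    | succ n ih =>
      rw [Function.iterate_succ_apply', hadd, ih, h74]
      push_cast; ring
  refine ⟨hW, fun i j hij h => hij ?_⟩
  have := hinv _ _ h
  rw [hW, hW] at this
  omega
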